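/- arXiv:1805.09880 — 2 statements merged into one kernel-verified Lean document; each statement's English description precedes it below -/
import Mathlib

section
/- Let φ = ∃x_1∀x_2…∃x_{n-1}∀x_n.ψ be a quantified Boolean formula with ψ quantifier-free and n even, and let (M,w0), the multi-pointed event models (E_i,E_i) for 1 ≤ i ≤ n, and χ be as in the single-agent multi-pointed PSPACE-hardness construction. Then M,w0 ⊨ χ if and only if φ is true. -/
/-! An update with `(E_i, E_i)` splits the model into two unrelated copies, one per event:
the `⊤`-copy of the group of worlds of an assignment is that group again, while the
`¬x_i`-copy loses exactly the world making `x_i` true. Hence the copies of `w0` under the two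
designated events represent the assignment with `x_i` true and with `x_i` false, so
`⟨E_i, E_i⟩` and `[E_i, E_i]` act as `∃x_i` and `∀x_i`; at the end `K̂_a x_i` holds exactly
when the chosen assignment makes `x_i` true, so `χ'` evaluates `ψ`. -/

namespace DELMC

inductive DForm (Agent : Type) : Type
  | atom : ℕ → DForm Agent
  | neg : DForm Agent → DForm Agent
  | and : DForm Agent → DForm Agent → DForm Agent
  | K : Agent → DForm Agent → DForm Agent
  | upd : (k : ℕ) → (Agent → Fin (k+1) → Fin (k+1) → Bool) →
      (Fin (k+1) → DForm Agent) → (Fin (k+1) → List (ℕ × Bool)) →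
      (Fin (k+1) → Bool) → DForm Agent → DForm Agent

structure EpiModel (Agent : Type) where
  World : Type
  rel : Agent → World → World → Prop
  val : World → ℕ → Prop

def postEval (l : List (ℕ × Bool)) (p : ℕ) : Option Bool :=
  (l.find? (fun q => q.1 == p)).map Prod.snd

def updModel {Agent : Type} (M : EpiModel Agent) (k : ℕ)
    (S : Agent → Fin (k+1) → Fin (k+1) → Bool)
    (dom : M.World → Fin (k+1) → Prop)
    (post : Fin (k+1) → List (ℕ × Bool)) : EpiModel Agent where
  World := { p : M.World × Fin (k+1) // dom p.1 p.2 }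
  rel a u v := M.rel a u.1.1 v.1.1 ∧ S a u.1.2 v.1.2 = true
  val u p :=
    match postEval (post u.1.2) p with
    | some b => b = true
    | none => M.val u.1.1 p

def Sat {Agent : Type} : (M : EpiModel Agent) → M.World → DForm Agent → Prop
  | M, w, .atom p => M.val w p
  | M, w, .neg φ => ¬ Sat M w φ
  | M, w, .and φ ψ => Sat M w φ ∧ Sat M w ψ
  | M, w, .K a φ => ∀ v, M.rel a w v → Sat M v φ
  | M, w, .upd k S pre post des φ =>
      ∀ e, des e = true → ∀ h : Sat M w (pre e),
        Sat (updModel M k S (fun v e' => Sat M v (pre e')) post) ⟨(w, e), h⟩ φ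

/-- `K̂_a φ := ¬ K_a ¬ φ`. -/
def khat {Agent : Type} (a : Agent) (φ : DForm Agent) : DForm Agent := .neg (.K a (.neg φ))

/-- The formula `⊤` (as the abbreviation `¬(p ∧ ¬p)`). -/
def dtop {Agent : Type} : DForm Agent := .neg (.and (.atom 0) (.neg (.atom 0)))

/-- Implication `φ → ψ`, as the abbreviation `¬(φ ∧ ¬ψ)`. -/
def dimp {Agent : Type} (φ ψ : DForm Agent) : DForm Agent := .neg (.and φ (.neg ψ))

/-- Conjunction of a list of formulas. -/
def bigAnd {Agent : Type} : List (DForm Agent) → DForm Agent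
  | [] => dtop
  | [φ] => φ
  | φ :: rest => .and φ (bigAnd rest)

/-- An epistemic model is S5 if all relations are equivalence relations. -/
def EpiModel.IsS5 {Agent : Type} (M : EpiModel Agent) : Prop := ∀ a, Equivalence (M.rel a)

/-- A list of literals contains no complementary pair. -/
def NoComplPair (l : List (ℕ × Bool)) : Prop := ∀ p : ℕ, ¬ ((p, true) ∈ l ∧ (p, false) ∈ l)

/-- All update modalities in the formula use S5 event models (with no constraint on
designated events or postconditions beyond non-complementarity). -/
def DForm.updsS5 {Agent : Type} : DForm Agent → Prop
  | .atom _ => True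
  | .neg φ => φ.updsS5
  | .and φ ψ => φ.updsS5 ∧ ψ.updsS5
  | .K _ φ => φ.updsS5
  | .upd _ S pre post _ φ =>
      (∀ a, Equivalence (fun i j => S a i j = true)) ∧
      (∀ e, NoComplPair (post e)) ∧ (∀ e, (pre e).updsS5) ∧ φ.updsS5

/-- All update modalities are single-pointed (exactly one designated event). -/
def DForm.updsSingle {Agent : Type} : DForm Agent → Prop
  | .atom _ => True
  | .neg φ => φ.updsSingle
  | .and φ ψ => φ.updsSingle ∧ ψ.updsSingle
  | .K _ φ => φ.updsSingle
  | .upd _ _ pre _ des φ =>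
      (∃! e, des e = true) ∧ (∀ e, (pre e).updsSingle) ∧ φ.updsSingle

/-- All update modalities have empty postconditions. -/
def DForm.updsNoPost {Agent : Type} : DForm Agent → Prop
  | .atom _ => True
  | .neg φ => φ.updsNoPost
  | .and φ ψ => φ.updsNoPost ∧ ψ.updsNoPost
  | .K _ φ => φ.updsNoPost
  | .upd _ _ pre post _ φ =>
      (∀ e, post e = []) ∧ (∀ e, (pre e).updsNoPost) ∧ φ.updsNoPost

/-- The formula contains no update modalities (it is a formula of basic epistemic logic). -/
def DForm.noUpd {Agent : Type} : DForm Agent → Prop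
  | .atom _ => True
  | .neg φ => φ.noUpd
  | .and φ ψ => φ.noUpd ∧ ψ.noUpd
  | .K _ φ => φ.noUpd
  | .upd _ _ _ _ _ _ => False

/-- All propositional variables occurring in the formula belong to `s`. -/
def DForm.atomsSub {Agent : Type} (s : Set ℕ) : DForm Agent → Prop
  | .atom p => p ∈ s
  | .neg φ => φ.atomsSub s
  | .and φ ψ => φ.atomsSub s ∧ ψ.atomsSub s
  | .K _ φ => φ.atomsSub s
  | .upd _ _ pre post _ φ =>
      (∀ e, (pre e).atomsSub s) ∧ (∀ e q, q ∈ post e → q.1 ∈ s) ∧ φ.atomsSub s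

/-- Event models (with events `Fin (k+1)`, hence finite and nonempty). -/
structure EvtModel (Agent : Type) where
  k : ℕ
  S : Agent → Fin (k+1) → Fin (k+1) → Bool
  pre : Fin (k+1) → DForm Agent
  post : Fin (k+1) → List (ℕ × Bool)

def EvtModel.IsS5 {Agent : Type} (E : EvtModel Agent) : Prop :=
  ∀ a, Equivalence (fun i j => E.S a i j = true)

def EvtModel.NoPost {Agent : Type} (E : EvtModel Agent) : Prop := ∀ e, E.post e = []

/-- The product update `M ⊗ E` of an epistemic model with an event model. -/
def EpiModel.update {Agent : Type} (M : EpiModel Agent) (E : EvtModel Agent) : EpiModel Agent :=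
  updModel M E.k E.S (fun w e => Sat M w (E.pre e)) E.post

/-- The single-pointed update modality `[E, d]φ` as a formula. -/
def updSingle {Agent : Type} (E : EvtModel Agent) (d : Fin (E.k+1)) (φ : DForm Agent) :
    DForm Agent :=
  .upd E.k E.S E.pre E.post (fun e => decide (e = d)) φ

/-- The multi-pointed update modality `[E, E_d]φ` with all events designated. -/
def updAll {Agent : Type} (E : EvtModel Agent) (φ : DForm Agent) : DForm Agent :=
  .upd E.k E.S E.pre E.post (fun _ => true) φ

/-- The submodel of `M` induced by the set `U` of worlds. -/
def EpiModel.restrict {Agent : Type} (M : EpiModel Agent) (U : M.World → Prop) :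
    EpiModel Agent where
  World := {w : M.World // U w}
  rel a u v := M.rel a u.1 v.1
  val u p := M.val u.1 p

/-- `Z` is a bisimulation between the models `M` and `N`. -/
def IsBisim {Agent : Type} (M N : EpiModel Agent) (Z : M.World → N.World → Prop) : Prop :=
  ∀ u u', Z u u' →
    (∀ p, M.val u p ↔ N.val u' p) ∧
    (∀ a v, M.rel a u v → ∃ v', N.rel a u' v' ∧ Z v v') ∧
    (∀ a v', N.rel a u' v' → ∃ v, M.rel a u v ∧ Z v v')

/-- The pointed models `(M, w)` and `(N, v)` are bisimilar. -/
def Bisimilar {Agent : Type} (M : EpiModel Agent) (w : M.World)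
    (N : EpiModel Agent) (v : N.World) : Prop :=
  ∃ Z, IsBisim M N Z ∧ Z w v

/-- Quantifier-free propositional formulas. -/
inductive PropForm : Type
  | atom : ℕ → PropForm
  | neg : PropForm → PropForm
  | and : PropForm → PropForm → PropForm

def PropForm.eval (α : ℕ → Bool) : PropForm → Bool
  | .atom p => α p
  | .neg φ => !(φ.eval α)
  | .and φ ψ => φ.eval α && ψ.eval α

def PropForm.atomsSub (s : Set ℕ) : PropForm → Prop
  | .atom p => p ∈ s
  | .neg φ => φ.atomsSub s
  | .and φ ψ => φ.atomsSub s ∧ ψ.atomsSub s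

/-- `β` is lexicographically larger than `α` w.r.t. the ordering `x_1 ≺ … ≺ x_n`
(variable `x_i` is the propositional variable `i`). -/
def LexGT (n : ℕ) (β α : ℕ → Bool) : Prop :=
  ∃ i, 1 ≤ i ∧ i ≤ n ∧ β i = true ∧ α i = false ∧ ∀ j, 1 ≤ j → j < i → β j = α j

/-- `α` is the lexicographically maximal assignment satisfying `ψ` (w.r.t. `x_1 ≺ … ≺ x_n`). -/
def IsLexMaxSat (n : ℕ) (ψ : PropForm) (α : ℕ → Bool) : Prop :=
  ψ.eval α = true ∧ ∀ β, ψ.eval β = true → ¬ LexGT n β α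

/-- Truth of the partially quantified Boolean formula `Q_i x_i … Q_n x_n. ψ` under an
assignment, where `Q_j = ∃` for odd `j` and `Q_j = ∀` for even `j`; the first argument is
the number of remaining quantifiers (i.e. `n + 1 - i`), the second is the index `i`. -/
def QBFAux (ψ : PropForm) : ℕ → ℕ → (ℕ → Bool) → Prop
  | 0, _, α => ψ.eval α = true
  | m+1, i, α =>
    if i % 2 = 1 then ∃ b, QBFAux ψ m (i+1) (Function.update α i b)
    else ∀ b, QBFAux ψ m (i+1) (Function.update α i b)

/-- Truth of the quantified Boolean formula `∃x_1 ∀x_2 … Q_n x_n. ψ`. -/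
def QBFTrue (n : ℕ) (ψ : PropForm) : Prop := QBFAux ψ n 1 (fun _ => false)

/-- Concrete finite epistemic models, suitable as inputs of algorithms. -/
structure FinModel (Agent : Type) where
  m : ℕ
  rel : Agent → Fin (m+1) → Fin (m+1) → Bool
  val : Fin (m+1) → List ℕ

def FinModel.toEpi {Agent : Type} (M : FinModel Agent) : EpiModel Agent where
  World := Fin (M.m+1)
  rel a u v := M.rel a u v = true
  val w p := p ∈ M.val w

def FinModel.IsS5 {Agent : Type} (M : FinModel Agent) : Prop :=
  ∀ a, Equivalence (fun u v => M.rel a u v = true)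


/-! ### The Δ₂ᵖ-hardness construction (single agent, postconditions).
Variable `z` is the propositional variable `0`; variable `x_i` is `i`. -/

/-- The embedding of propositional formulas into the (dynamic) epistemic language. -/
def PropForm.toDForm {Agent : Type} : PropForm → DForm Agent
  | .atom p => .atom p
  | .neg φ => .neg φ.toDForm
  | .and φ ψ => .and φ.toDForm ψ.toDForm

/-- The initial model of the Δ₂ᵖ-hardness construction: worlds `w₀ = 0` (making exactly `z`
true) and `w₁ = 1` (making everything false), fully `a`-related. -/
def deltaM : EpiModel Unit where
  World := Fin 2
  rel _ _ _ := True
  val w p := w = 0 ∧ p = 0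

def deltaW0 : deltaM.World := (0 : Fin 2)

/-- The event model `(E_i, e_i)`: three mutually related events; designated event `0` with
precondition `z`; event `1` with precondition `¬z` and postcondition `{x_i}`; event `2`
with precondition `¬z` and empty postcondition. -/
def deltaE (i : ℕ) : EvtModel Unit where
  k := 2
  S _ _ _ := true
  pre e := if e = 0 then .atom 0 else .neg (.atom 0)
  post e := if e = 1 then [(i, true)] else []

/-- The event model `(E'_i, e'_i)`: designated event `0` with precondition `z`; event `1`
with precondition `¬z ∧ K̂_a(x_i ∧ φ)` and postcondition `{x_i}`; event `2` with
precondition `¬z ∧ ¬K̂_a(x_i ∧ φ)` and postcondition `{¬x_i}`. -/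
def deltaE' (i : ℕ) (ψ : PropForm) : EvtModel Unit where
  k := 2
  S _ _ _ := true
  pre e :=
    if e = 0 then .atom 0
    else if e = 1 then .and (.neg (.atom 0)) (khat () (.and (.atom i) ψ.toDForm))
    else .and (.neg (.atom 0)) (.neg (khat () (.and (.atom i) ψ.toDForm)))
  post e := if e = 1 then [(i, true)] else if e = 2 then [(i, false)] else []

/-- The formula `χ = [E_1,e_1]…[E_n,e_n][E'_1,e'_1]…[E'_n,e'_n] K̂_a x_n`. -/
def deltaChi (n : ℕ) (ψ : PropForm) : DForm Unit :=
  ((List.range n).map (fun j => deltaE (j+1))).foldr (fun E acc => updSingle E 0 acc)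
    (((List.range n).map (fun j => deltaE' (j+1) ψ)).foldr (fun E acc => updSingle E 0 acc)
      (khat () (.atom n)))

/-- The model `M' = M ⊗ E_1 ⊗ … ⊗ E_n`. -/
def deltaM' (n : ℕ) : EpiModel Unit :=
  (((List.range n).map (fun j => deltaE (j+1))).foldl EpiModel.update deltaM)

/-- The model `M'' = M ⊗ E_1 ⊗ … ⊗ E_n ⊗ E'_1 ⊗ … ⊗ E'_n`. -/
def deltaM'' (n : ℕ) (ψ : PropForm) : EpiModel Unit :=
  (((List.range n).map (fun j => deltaE' (j+1) ψ)).foldl EpiModel.update (deltaM' n))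

/-! ### The single-agent multi-pointed PSPACE-hardness construction.
Variable `x_i` is the propositional variable `i`. -/

/-- The group of worlds corresponding to a truth assignment `α`: a world `none` making
no variable true and, for each `j` with `α x_j = 1`, a world `some j` making exactly `x_j`
true; all worlds mutually `a`-related. -/
def groupModel1 (n : ℕ) (α : ℕ → Bool) : EpiModel Unit where
  World := {o : Option (Fin n) // ∀ j : Fin n, o = some j → α (j.1+1) = true}
  rel _ _ _ := True
  val w p := ∃ j : Fin n, w.1 = some j ∧ p = j.1 + 1

/-- The designated world of the group of worlds corresponding to `α`. -/
def groupW0 (n : ℕ) (α : ℕ → Bool) : (groupModel1 n α).World :=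
  ⟨none, fun _ h => nomatch h⟩

/-- The multi-pointed event model `(E_i, E_i)`: two events, both designated, with
preconditions `⊤` and `¬x_i`, empty postconditions, and only reflexive relations. -/
def qEvt (i : ℕ) : EvtModel Unit where
  k := 1
  S _ e f := decide (e = f)
  pre e := if e = 0 then dtop else .neg (.atom i)
  post _ := []

/-- `χ'`: the result of replacing every variable `x_i` in `ψ` by `K̂_a x_i`. -/
def propKhat : PropForm → DForm Unit
  | .atom p => khat () (.atom p)
  | .neg φ => .neg (propKhat φ)
  | .and φ ψ => .and (propKhat φ) (propKhat ψ)

/-- `qChiAux ψ' m i` is the formula `⟨E_i,E_i⟩[E_{i+1},E_{i+1}]…ψ'` (`m` operators,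
diamond at odd indices, box at even indices). -/
def qChiAux (ψ' : DForm Unit) : ℕ → ℕ → DForm Unit
  | 0, _ => ψ'
  | m+1, i =>
    if i % 2 = 1 then .neg (updAll (qEvt i) (.neg (qChiAux ψ' m (i+1))))
    else updAll (qEvt i) (qChiAux ψ' m (i+1))

/-- The formula `χ = ⟨E_1,E_1⟩[E_2,E_2]…⟨E_{n-1},E_{n-1}⟩[E_n,E_n]χ'`. -/
def qChi (n : ℕ) (ψ : PropForm) : DForm Unit := qChiAux (propKhat ψ) n 1


/-! ### The two-agent PSPACE-hardness construction.
Agents: `a = 0`, `b = 1` (of type `Fin 2`). Propositional variables: `z_0 = 0`,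
`z_1 = 1`, `z_2 = 2`. Variable `x_j` of the QBF corresponds to the z1-chain of length `j`. -/

/-- The underlying worlds of a group of worlds, possibly together with z2-chains:
the central world, the worlds `z1 j k` (position `k` in the z1-chain of length `j+1`,
which represents the variable `x_{j+1}`), and the worlds `z2 i k` (position `k` in the
z2-chain of length `i+1`). -/
inductive GWBase (n m : ℕ) : Type
  | central : GWBase n m
  | z1 : (j : Fin n) → Fin (j.1+2) → GWBase n m
  | z2 : (i : Fin m) → Fin (i.1+2) → GWBase n m

/-- Membership in the `a`-clique: the central world and the first worlds of z1-chains. -/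
def aClique {n m : ℕ} : GWBase n m → Prop
  | .central => True
  | .z1 _ k => k.1 = 0
  | .z2 _ _ => False

/-- Membership in the `b`-clique: the central world and the first worlds of z2-chains. -/
def bClique {n m : ℕ} : GWBase n m → Prop
  | .central => True
  | .z1 _ _ => False
  | .z2 _ k => k.1 = 0

/-- Chain edges: consecutive positions of a z1-chain are related alternately by
`b`, `a`, `b`, … (starting with `b`), and those of a z2-chain alternately by
`a`, `b`, `a`, … (starting with `a`). -/
def chainEdge {n m : ℕ} (ag : Fin 2) : GWBase n m → GWBase n m → Prop
  | .z1 j k, .z1 j' k' =>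
      j.1 = j'.1 ∧ ((k'.1 = k.1 + 1 ∧ ag = (if k.1 % 2 = 0 then 1 else 0)) ∨
        (k.1 = k'.1 + 1 ∧ ag = (if k'.1 % 2 = 0 then 1 else 0)))
  | .z2 i k, .z2 i' k' =>
      i.1 = i'.1 ∧ ((k'.1 = k.1 + 1 ∧ ag = (if k.1 % 2 = 0 then 0 else 1)) ∨
        (k.1 = k'.1 + 1 ∧ ag = (if k'.1 % 2 = 0 then 0 else 1)))
  | _, _ => False

/-- The accessibility relations on `GWBase n m`. -/
def gwRel {n m : ℕ} (ag : Fin 2) (u v : GWBase n m) : Prop :=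
  u = v ∨ (ag = 0 ∧ aClique u ∧ aClique v) ∨ (ag = 1 ∧ bClique u ∧ bClique v) ∨
    chainEdge ag u v

/-- The valuation on `GWBase n m`: the central world makes exactly `z_1` and `z_2` true,
the first world of a chain makes exactly `z_1` (resp. `z_2`) true, the last world of a
chain makes exactly `z_0` true, and all other worlds make no variable true. -/
def gwVal {n m : ℕ} : GWBase n m → ℕ → Prop
  | .central, p => p = 1 ∨ p = 2
  | .z1 j k, p => (k.1 = 0 ∧ p = 1) ∨ (k.1 = j.1 + 1 ∧ p = 0)
  | .z2 i k, p => (k.1 = 0 ∧ p = 2) ∨ (k.1 = i.1 + 1 ∧ p = 0)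

/-- The group of worlds representing the truth assignment `α` to `x_1, …, x_n`
(containing a z1-chain of length `j` exactly when `α x_j = 1`), together with
z2-chains of lengths `1, …, m`. -/
def groupModel2 (n m : ℕ) (α : ℕ → Bool) : EpiModel (Fin 2) where
  World := {u : GWBase n m // ∀ (j : Fin n) (k : Fin (j.1+2)), u = GWBase.z1 j k → α (j.1+1) = true}
  rel ag u v := gwRel ag u.1 v.1
  val u p := gwVal u.1 p

/-- The central (designated) world of `groupModel2 n m α`. -/
def central2 (n m : ℕ) (α : ℕ → Bool) : (groupModel2 n m α).World :=
  ⟨.central, fun _ _ h => nomatch h⟩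

/-- The pair of formulas `(χ^a_j, χ^b_j)`. -/
def chiAB : ℕ → DForm (Fin 2) × DForm (Fin 2)
  | 0 => (.atom 0, .atom 0)
  | j+1 =>
    (khat 0 (.and (.neg (.atom 1)) (.and (.neg (.atom 2)) (chiAB j).2)),
     khat 1 (.and (.neg (.atom 1)) (.and (.neg (.atom 2)) (chiAB j).1)))

def chiA (j : ℕ) : DForm (Fin 2) := (chiAB j).1
def chiB (j : ℕ) : DForm (Fin 2) := (chiAB j).2

/-- `χ_j = z_1 ∧ ¬z_2 ∧ χ^b_j ∧ ¬χ^b_{j-1}` (for `j ≥ 1`). -/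
def chiX (j : ℕ) : DForm (Fin 2) :=
  .and (.atom 1) (.and (.neg (.atom 2)) (.and (chiB j) (.neg (chiB (j-1)))))

/-- `χ'_j = ¬z_1 ∧ z_2 ∧ χ^a_j ∧ ¬χ^a_{j-1}` (for `j ≥ 1`). -/
def chiX' (j : ℕ) : DForm (Fin 2) :=
  .and (.neg (.atom 1)) (.and (.atom 2) (.and (chiA j) (.neg (chiA (j-1)))))

/-- The event model `(E_i, e_i)` of the two-agent construction: events `f^1_i, …, f^5_i`
are `0, …, 4`; `{0,1,2}` is a `b`-clique; `1 S_a 3` and `2 S_a 4`; preconditions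
`⊤, ⊤, ⊤, ¬χ'_i, ¬χ'_i ∧ ¬χ_i`; empty postconditions; designated event `0`. -/
def twoEvt (i : ℕ) : EvtModel (Fin 2) where
  k := 4
  S ag e f := decide (e = f) ||
    (if ag = 1 then decide (e.1 ≤ 2 ∧ f.1 ≤ 2)
     else decide ((e.1 = 1 ∧ f.1 = 3) ∨ (e.1 = 3 ∧ f.1 = 1) ∨
       (e.1 = 2 ∧ f.1 = 4) ∨ (e.1 = 4 ∧ f.1 = 2)))
  pre e :=
    if e.1 ≤ 2 then dtop
    else if e.1 = 3 then .neg (chiX' i)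
    else .and (.neg (chiX' i)) (.neg (chiX i))
  post _ := []

/-- The conjunction `⋀_{1 ≤ j ≤ i} ¬K̂_b χ'_j`. -/
def negConj (i : ℕ) : DForm (Fin 2) :=
  bigAnd ((List.range i).map (fun t => .neg (khat 1 (chiX' (t+1)))))

/-- The conjunction `⋀_{i < j ≤ n} K̂_b χ'_j`. -/
def posConj (n i : ℕ) : DForm (Fin 2) :=
  bigAnd ((List.range (n-i)).map (fun t => khat 1 (chiX' (i+1+t))))

/-- The formula `z_1 ∧ z_2 ∧ ⋀_{1≤j≤i} ¬K̂_b χ'_j ∧ ⋀_{i<j≤n} K̂_b χ'_j`. -/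
def xiBody (n i : ℕ) : DForm (Fin 2) :=
  .and (.atom 1) (.and (.atom 2) (.and (negConj i) (posConj n i)))

/-- `ψ'`: the result of replacing every variable `x_i` in `ψ` by `K̂_a χ_i`. -/
def propToXi : PropForm → DForm (Fin 2)
  | .atom p => khat 0 (chiX p)
  | .neg φ => .neg (propToXi φ)
  | .and φ ψ => .and (propToXi φ) (propToXi ψ)

/-- `xiAux n ψ' m i` is the formula `ξ_i` (with `m = n + 1 - i` remaining steps). -/
def xiAux (n : ℕ) (ψ' : DForm (Fin 2)) : ℕ → ℕ → DForm (Fin 2)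
  | 0, _ => ψ'
  | m+1, i =>
    if i % 2 = 1 then khat 1 (khat 0 (.and (xiBody n i) (xiAux n ψ' m (i+1))))
    else .K 1 (.K 0 (dimp (xiBody n i) (xiAux n ψ' m (i+1))))

/-- The formula `ξ = [E_1,e_1]…[E_n,e_n]ξ_1`. -/
def xiFull (n : ℕ) (ψ : PropForm) : DForm (Fin 2) :=
  ((List.range n).map (fun j => twoEvt (j+1))).foldr (fun E acc => updSingle E 0 acc)
    (xiAux n (propToXi ψ) n 1)

/-- The initial model of the two-agent construction (z1-chains of lengths `1, …, n` for
the all-true assignment, z2-chains of lengths `1, …, n`). -/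
def twoM (n : ℕ) : EpiModel (Fin 2) := groupModel2 n n (fun _ => true)

/-- The model `M' = M ⊗ E_1 ⊗ … ⊗ E_n` of the two-agent construction. -/
def twoM' (n : ℕ) : EpiModel (Fin 2) :=
  ((List.range n).map (fun j => twoEvt (j+1))).foldl EpiModel.update (twoM n)

/-! ### The semi-private-announcement PSPACE-hardness construction. -/

/-- The semi-private announcement of `φ₁` versus `φ₂` to the agents `c` with `A c = true`:
two events with preconditions `φ₁` (designated, event `0`) and `φ₂`, empty postconditions,
related by `S_c` exactly for the agents `c` not in `A` (plus reflexive loops). -/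
def semiPrivate {Agent : Type} [DecidableEq Agent] (φ₁ φ₂ : DForm Agent) (A : Agent → Bool) :
    EvtModel Agent where
  k := 1
  S c e f := decide (e = f) || !(A c)
  pre e := if e = 0 then φ₁ else φ₂
  post _ := []

/-- The semi-private announcement `(E^1_i, f^1_i)`: `¬χ'_{i+n}` versus `¬χ'_{i+2n}`,
announced to agent `a`. -/
def spE1 (n i : ℕ) : EvtModel (Fin 2) :=
  semiPrivate (.neg (chiX' (i+n))) (.neg (chiX' (i+2*n))) (fun c => decide (c = 0))

/-- The semi-private announcement `(E^2_i, f^3_i)`: `⊤` versus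
`(¬K̂_b χ'_{i+n} ∧ z_2) → ¬χ'_i`, announced to agent `b`. -/
def spE2 (n i : ℕ) : EvtModel (Fin 2) :=
  semiPrivate dtop
    (dimp (.and (.neg (khat 1 (chiX' (i+n)))) (.atom 2)) (.neg (chiX' i)))
    (fun c => decide (c = 1))

/-- The semi-private announcement `(E^3_i, f^5_i)`: `⊤` versus
`((¬K̂_b χ'_{i+2n} ∧ z_2) → ¬χ'_i) ∧ ((¬K̂_a K̂_b χ'_{i+2n} ∧ z_1) → ¬χ_i)`,
announced to agent `b`. -/
def spE3 (n i : ℕ) : EvtModel (Fin 2) :=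
  semiPrivate dtop
    (.and (dimp (.and (.neg (khat 1 (chiX' (i+2*n)))) (.atom 2)) (.neg (chiX' i)))
      (dimp (.and (.neg (khat 0 (khat 1 (chiX' (i+2*n))))) (.atom 1)) (.neg (chiX i))))
    (fun c => decide (c = 1))

/-- The list of event models `E^1_1, E^2_1, E^3_1, …, E^1_n, E^2_n, E^3_n`. -/
def spList (n : ℕ) : List (EvtModel (Fin 2)) :=
  ((List.range n).map (fun j => [spE1 n (j+1), spE2 n (j+1), spE3 n (j+1)])).flatten

/-- `spXiAux n ψ' m i` is the formula `ξ_i` of the semi-private construction. -/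
def spXiAux (n : ℕ) (ψ' : DForm (Fin 2)) : ℕ → ℕ → DForm (Fin 2)
  | 0, _ => ψ'
  | m+1, i =>
    if i % 2 = 1 then
      khat 1 (.and (negConj i) (khat 0 (.and (xiBody n i) (spXiAux n ψ' m (i+1)))))
    else
      .K 1 (dimp (negConj i) (.K 0 (dimp (xiBody n i) (spXiAux n ψ' m (i+1)))))

/-- The formula `ξ = [E^1_1,f^1_1][E^2_1,f^3_1][E^3_1,f^5_1]…[E^3_n,f^5_n]ξ_1` of the
semi-private construction. -/
def spXiFull (n : ℕ) (ψ : PropForm) : DForm (Fin 2) :=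
  (spList n).foldr (fun E acc => updSingle E 0 acc) (spXiAux n (propToXi ψ) n 1)

/-- The initial model of the semi-private construction (z1-chains of lengths `1, …, n`
for the all-true assignment, z2-chains of lengths `1, …, 3n`). -/
def spM (n : ℕ) : EpiModel (Fin 2) := groupModel2 n (3*n) (fun _ => true)

/-- The model `M' = M ⊗ E^1_1 ⊗ E^2_1 ⊗ E^3_1 ⊗ … ⊗ E^3_n`. -/
def spM' (n : ℕ) : EpiModel (Fin 2) :=
  (spList n).foldl EpiModel.update (spM n)

lemma sat_dtop {Agent : Type} {M : EpiModel Agent} (w : M.World) : Sat M w dtop := by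
  simp only [dtop, Sat]
  tauto

lemma PropForm.eval_congr {s : Set ℕ} {ψ : PropForm} (hψ : ψ.atomsSub s) {α β : ℕ → Bool}
    (h : ∀ p ∈ s, α p = β p) : ψ.eval α = ψ.eval β := by
  induction ψ with
  | atom p => exact h p hψ
  | neg φ ih => simp only [PropForm.eval, ih hψ]
  | and φ χ ihφ ihχ => simp only [PropForm.eval, ihφ hψ.1, ihχ hψ.2]

lemma qbfAux_congr {s : Set ℕ} {ψ : PropForm} (hψ : ψ.atomsSub s) {m i : ℕ} {α β : ℕ → Bool}
    (h : ∀ p ∈ s, p ∉ Set.Ico i (i + m) → α p = β p) :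
    QBFAux ψ m i α ↔ QBFAux ψ m i β := by
  induction m generalizing i α β with
  | zero => simpa [QBFAux] using PropForm.eval_congr hψ fun p hp => h p hp (by simp)
  | succ m ih =>
    have step (b : Bool) :
        QBFAux ψ m (i + 1) (Function.update α i b) ↔ QBFAux ψ m (i + 1) (Function.update β i b) := by
      refine ih fun p hp hpi => ?_
      by_cases hpe : p = i
      · simp [hpe]
      · rw [Function.update_of_ne hpe, Function.update_of_ne hpe]
        exact h p hp fun ⟨h₁, h₂⟩ => hpi ⟨by omega, by omega⟩
    by_cases hodd : i % 2 = 1 <;> simp [QBFAux, hodd, step]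

/-- Seen from `w`, the model `M` looks like the group of worlds of the assignment `γ`. -/
structure Encodes (M : EpiModel Unit) (w : M.World) (γ : ℕ → Bool) : Prop where
  not_val : ∀ p, ¬ M.val w p
  val_unique : ∀ v p q, M.rel () w v → M.val v p → M.val v q → p = q
  eq_true_iff : ∀ p, γ p = true ↔ ∃ v, M.rel () w v ∧ M.val v p

lemma encodes_groupW0 (n : ℕ) (α : ℕ → Bool) :
    Encodes (groupModel1 n α) (groupW0 n α) (fun p => decide (1 ≤ p ∧ p ≤ n ∧ α p = true)) where
  not_val p := by
    rintro ⟨j, hj, -⟩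
    simp [groupW0] at hj
  val_unique v p q _ := by
    rintro ⟨j, hj, rfl⟩ ⟨j', hj', rfl⟩
    simp_all
  eq_true_iff p := by
    simp only [decide_eq_true_iff]
    constructor
    · rintro ⟨h1, h2, hα⟩
      have hj : p - 1 + 1 = p := by omega
      exact ⟨⟨some ⟨p - 1, by omega⟩, fun j hj' => by cases hj'; simpa [hj] using hα⟩,
        trivial, ⟨p - 1, by omega⟩, rfl, hj.symm⟩
    · rintro ⟨⟨_, hv⟩, _, j, rfl, rfl⟩
      exact ⟨by omega, by omega, hv j rfl⟩

section UpdateQEvt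

variable {M : EpiModel Unit} {w : M.World} {γ : ℕ → Bool}

namespace Encodes

lemma sat_propKhat (h : Encodes M w γ) (χ : PropForm) :
    Sat M w (propKhat χ) ↔ χ.eval γ = true := by
  induction χ with
  | atom p =>
    simp only [propKhat, khat, Sat, PropForm.eval, h.eq_true_iff, not_forall, not_not,
      exists_prop]
  | neg φ ih => simp [propKhat, Sat, PropForm.eval, ih]
  | and φ χ ihφ ihχ => simp [propKhat, Sat, PropForm.eval, ihφ, ihχ]

lemma sat_qEvt_pre (h : Encodes M w γ) (i : ℕ) (e : Fin 2) : Sat M w ((qEvt i).pre e) := by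
  fin_cases e
  · exact sat_dtop w
  · exact h.not_val i

lemma sat_updAll_qEvt_iff (h : Encodes M w γ) {i : ℕ} {φ : DForm Unit} :
    Sat M w (updAll (qEvt i) φ) ↔
      ∀ e : Fin 2, Sat (M.update (qEvt i)) ⟨(w, e), h.sat_qEvt_pre i e⟩ φ :=
  ⟨fun H e => H e rfl _, fun H e _ _ => H e⟩

end Encodes

@[simp]
lemma update_qEvt_val {i : ℕ} (u : (M.update (qEvt i)).World) (p : ℕ) :
    (M.update (qEvt i)).val u p ↔ M.val u.1.1 p := by
  simp [EpiModel.update, updModel, qEvt, postEval]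

@[simp]
lemma update_qEvt_rel {i : ℕ} (u v : (M.update (qEvt i)).World) :
    (M.update (qEvt i)).rel () u v ↔ M.rel () u.1.1 v.1.1 ∧ u.1.2 = v.1.2 := by
  simp [EpiModel.update, updModel, qEvt]

lemma exists_rel_update_qEvt_iff {i : ℕ} {e : Fin 2} (he : Sat M w ((qEvt i).pre e))
    (P : M.World → Prop) :
    (∃ v : (M.update (qEvt i)).World, (M.update (qEvt i)).rel () ⟨(w, e), he⟩ v ∧ P v.1.1) ↔
      ∃ v, M.rel () w v ∧ Sat M v ((qEvt i).pre e) ∧ P v := by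
  constructor
  · rintro ⟨⟨⟨v, f⟩, hv⟩, hrel, hP⟩
    obtain ⟨hwv, rfl⟩ := (update_qEvt_rel _ _).1 hrel
    exact ⟨v, hwv, hv, hP⟩
  · rintro ⟨v, hwv, hv, hP⟩
    exact ⟨⟨(v, e), hv⟩, (update_qEvt_rel _ _).2 ⟨hwv, rfl⟩, hP⟩

lemma Encodes.update_qEvt (h : Encodes M w γ) (i : ℕ) (e : Fin 2)
    (he : Sat M w ((qEvt i).pre e)) :
    Encodes (M.update (qEvt i)) ⟨(w, e), he⟩ (Function.update γ i (decide (e = 0) && γ i)) where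
  not_val p hp := h.not_val p ((update_qEvt_val _ p).1 hp)
  val_unique v p q hrel := by
    simpa using h.val_unique v.1.1 p q ((update_qEvt_rel _ _).1 hrel).1
  eq_true_iff p := by
    simp only [update_qEvt_val]
    rw [exists_rel_update_qEvt_iff he (M.val · p)]
    by_cases hp : p = i
    · subst hp
      fin_cases e
      · simp [qEvt, sat_dtop, h.eq_true_iff]
      · simp [qEvt, Sat]
    · simp only [Function.update_of_ne hp, h.eq_true_iff]
      fin_cases e
      · simp [qEvt, sat_dtop]
      · refine ⟨fun ⟨v, hwv, hv⟩ => ⟨v, hwv, fun hvi => hp (h.val_unique v p i hwv hv hvi), hv⟩,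
          fun ⟨v, hwv, _, hv⟩ => ⟨v, hwv, hv⟩⟩

lemma Encodes.sat_qChiAux_iff {ψ : PropForm} {m i : ℕ} (h : Encodes M w γ)
    (hγ : ∀ j, i ≤ j → j < i + m → γ j = true) :
    Sat M w (qChiAux (propKhat ψ) m i) ↔ QBFAux ψ m i γ := by
  induction m generalizing i γ M with
  | zero => simpa [qChiAux, QBFAux] using h.sat_propKhat ψ
  | succ m ih =>
    have hγi : γ i = true := hγ i le_rfl (by omega)
    have step (e : Fin 2) (he : Sat M w ((qEvt i).pre e)) :
        Sat (M.update (qEvt i)) ⟨(w, e), he⟩ (qChiAux (propKhat ψ) m (i + 1)) ↔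
          QBFAux ψ m (i + 1) (Function.update γ i (decide (e = 0))) := by
      have := ih (i := i + 1) (h.update_qEvt i e he) fun j hij hjm => by
        rw [Function.update_of_ne (by omega)]
        exact hγ j (by omega) (by omega)
      simpa [hγi] using this
    by_cases hodd : i % 2 = 1
    · simp only [qChiAux, QBFAux, if_pos hodd, Sat]
      rw [h.sat_updAll_qEvt_iff]
      simp only [Sat, not_forall, not_not]
      rw [Fin.exists_fin_two, step, step]
      simp [or_comm]
    · simp only [qChiAux, QBFAux, if_neg hodd]
      rw [h.sat_updAll_qEvt_iff, Fin.forall_fin_two, step, step]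
      simp [and_comm]

end UpdateQEvt

theorem statement8_general (n : ℕ) (ψ : PropForm)
    (hvars : ψ.atomsSub (Set.Icc 1 n)) :
    Sat (groupModel1 n (fun _ => true)) (groupW0 n (fun _ => true)) (qChi n ψ) ↔
      QBFTrue n ψ := by
  have hinit := encodes_groupW0 n fun _ => true
  rw [qChi, hinit.sat_qChiAux_iff fun j hj₁ hj₂ => decide_eq_true ⟨hj₁, by omega, rfl⟩, QBFTrue]
  exact qbfAux_congr hvars fun p hp hp' => absurd ⟨hp.1, Nat.lt_one_add_iff.2 hp.2⟩ hp'

/-- In the single-agent multi-pointed PSPACE-hardness construction, for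
every quantified Boolean formula `∃x_1 ∀x_2 … ∃x_{n-1} ∀x_n. ψ` (with `ψ`
quantifier-free and `n` even): `M, w0 ⊨ χ` if and only if the quantified Boolean formula
is true, where `M` is the group of worlds corresponding to the all-true assignment. -/
theorem statement8 (n : ℕ) (hn : Even n) (hpos : 0 < n) (ψ : PropForm)
    (hvars : ψ.atomsSub (Set.Icc 1 n)) :
    Sat (groupModel1 n (fun _ => true)) (groupW0 n (fun _ => true)) (qChi n ψ) ↔
      QBFTrue n ψ :=
  statement8_general n ψ hvars

end DELMC
end

section
/- Let G be the group of worlds representing a truth assignment α to x_1,…,x_n (in the two-agent three-variable encoding). Then for every 1 ≤ j ≤ n and every world v of G, the formula χ_j = z_1 ∧ ¬z_2 ∧ χ^b_j ∧ ¬χ^b_{j-1} is true at v if and only if v is the first world of a z1-chain of length exactly j in G; consequently, the central world of G satisfies K̂_a χ_j if and only if α(x_j) = 1. -/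
namespace DELMC

/-!
On a z1-chain of length `L`, whose edge from position `K` to `K + 1` belongs to `b` for even
`K` and to `a` for odd `K`, the formula `χ^c_t` holds at position `K` exactly when the last
world, the only `z_0`-world, is reached from `K` by an alternating walk of at most `t` steps
that starts with agent `c` and never re-enters the first world (the `¬z_1` conjuncts). Such a
walk needs `L - K` steps, plus one reflexive step when the edge leaving `K` forward does not
belong to `c`. The central world satisfies no `χ^c_t`, since all its neighbours make `z_1` true.
So `χ^b_j ∧ ¬χ^b_{j-1}` holds at the first world of a chain exactly when the chain has length `j`.
-/

theorem sat_khat {Agent : Type} (M : EpiModel Agent) (w : M.World) (a : Agent)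
    (φ : DForm Agent) : Sat M w (khat a φ) ↔ ∃ v, M.rel a w v ∧ Sat M v φ := by
  show ¬ (∀ v, M.rel a w v → ¬ Sat M v φ) ↔ _
  simp only [not_forall, not_not, exists_prop]

/-- A step of agent `ag` between positions of a z1-chain: `(K + ag) % 2 = 1` says that the edge
from `K` to `K + 1` belongs to `ag`. -/
def ChainStep (ag : Fin 2) (K K' : ℕ) : Prop :=
  K' = K ∨ (K' = K + 1 ∧ (K + ag.val) % 2 = 1) ∨ (K = K' + 1 ∧ (K' + ag.val) % 2 = 1)

/-- Position `K` of a z1-chain of length `L` satisfies `χ^ag_t`. -/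
def ReachesEnd (ag : Fin 2) (t L K : ℕ) : Prop :=
  K = L ∨ ((ag.val = 1 ∨ 1 ≤ K) ∧ L + (K + ag.val + 1) % 2 ≤ t + K)

theorem reachesEnd_zero_iff {ag : Fin 2} {L K : ℕ} (hK : K ≤ L) :
    ReachesEnd ag 0 L K ↔ K = L := by
  unfold ReachesEnd
  omega

theorem reachesEnd_succ_iff {ag ag' : Fin 2} (hag : ag ≠ ag') {t L K : ℕ} (hL : 1 ≤ L)
    (hK : K ≤ L) :
    ReachesEnd ag (t + 1) L K ↔
      ∃ K' ≤ L, K' ≠ 0 ∧ ChainStep ag K K' ∧ ReachesEnd ag' t L K' := by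
  have hsum : ag.val + ag'.val = 1 := by
    have := Fin.val_ne_of_ne hag
    omega
  unfold ReachesEnd ChainStep
  constructor
  · intro h
    by_cases hforward : K ≠ L ∧ (K + ag.val) % 2 = 1
    · exact ⟨K + 1, by omega, by omega, by omega, by omega⟩
    · exact ⟨K, hK, by omega, by omega, by omega⟩
  · rintro ⟨K', -, hK'0, hstep, hreach⟩
    omega

section GroupOfWorlds

variable {n m : ℕ} {α : ℕ → Bool}

def OnZ1Chain (P : ℕ → ℕ → Prop) : GWBase n m → Prop
  | .z1 J K => P (J.1 + 1) K.1
  | _ => False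

theorem onZ1Chain_congr {P Q : ℕ → ℕ → Prop} (h : ∀ L K, 1 ≤ L → K ≤ L → (P L K ↔ Q L K))
    (u : GWBase n m) : OnZ1Chain P u ↔ OnZ1Chain Q u := by
  cases u with
  | z1 J K => exact h _ _ (by omega) (by omega)
  | _ => rfl

def z1World (J : Fin n) (K : Fin (J.1 + 2)) (hα : α (J.1 + 1) = true) :
    (groupModel2 n m α).World :=
  ⟨.z1 J K, fun _ _ h => by cases h; exact hα⟩

theorem fin_two_eq_ite_iff {ag : Fin 2} {K : ℕ} :
    ag = (if K % 2 = 0 then 1 else 0) ↔ (K + ag.val) % 2 = 1 := by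
  have := ag.isLt
  rw [Fin.ext_iff]
  split_ifs <;> simp only [Fin.val_one, Fin.val_zero] <;> omega

theorem gwRel_z1_iff {ag : Fin 2} {u : GWBase n m} {J : Fin n} {K' : Fin (J.1 + 2)}
    (hK' : K'.1 ≠ 0) :
    gwRel ag u (.z1 J K') ↔ ∃ K : Fin (J.1 + 2), u = .z1 J K ∧ ChainStep ag K.1 K'.1 := by
  constructor
  · rintro (rfl | ⟨-, -, hK'0⟩ | ⟨-, -, hb⟩ | hedge)
    · exact ⟨K', rfl, Or.inl rfl⟩
    · exact absurd hK'0 hK'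
    · exact hb.elim
    · cases u with
      | z1 J₀ K =>
        obtain ⟨hJ, hstep⟩ := hedge
        obtain rfl : J₀ = J := Fin.ext hJ
        simp only [fin_two_eq_ite_iff] at hstep
        exact ⟨K, rfl, Or.inr hstep⟩
      | _ => exact hedge.elim
  · rintro ⟨K, rfl, hKK' | hstep⟩
    · exact Or.inl (congrArg _ (Fin.ext hKK'.symm))
    · refine Or.inr (Or.inr (Or.inr ⟨rfl, ?_⟩))
      simpa only [fin_two_eq_ite_iff] using hstep

theorem sat_khat_step_iff {ag : Fin 2} {φ : DForm (Fin 2)} {P : ℕ → ℕ → Prop}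
    (hφ : ∀ v : (groupModel2 n m α).World, Sat _ v φ ↔ OnZ1Chain P v.1)
    (v : (groupModel2 n m α).World) :
    Sat _ v (khat ag (.and (.neg (.atom 1)) (.and (.neg (.atom 2)) φ))) ↔
      OnZ1Chain (fun L K => ∃ K' ≤ L, K' ≠ 0 ∧ ChainStep ag K K' ∧ P L K') v.1 := by
  rw [sat_khat]
  constructor
  · rintro ⟨u, hrel, hz1, -, hu⟩
    rw [hφ] at hu
    change gwRel ag v.1 u.1 at hrel
    change ¬ gwVal u.1 1 at hz1
    generalize u.1 = w at hrel hz1 hu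
    cases w with
    | z1 J K' =>
      have hK' : K'.1 ≠ 0 := fun h => hz1 (Or.inl ⟨h, rfl⟩)
      obtain ⟨K, hv, hstep⟩ := (gwRel_z1_iff hK').1 hrel
      rw [hv]
      exact ⟨K', by omega, hK', hstep, hu⟩
    | _ => exact hu.elim
  · obtain ⟨v, hv_mem⟩ := v
    cases v with
    | z1 J K =>
      rintro ⟨K', hK'L, hK'0, hstep, hP⟩
      refine ⟨z1World J ⟨K', by omega⟩ (hv_mem J K rfl),
        (gwRel_z1_iff hK'0).2 ⟨K, rfl, hstep⟩, ?_, ?_, (hφ _).2 hP⟩ <;>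
      · simp only [Sat, z1World, groupModel2, gwVal]
        omega
    | _ => exact False.elim

theorem sat_z0_iff (v : (groupModel2 n 0 α).World) :
    Sat _ v (.atom 0) ↔ OnZ1Chain (fun L K => K = L) v.1 := by
  obtain ⟨v, -⟩ := v
  cases v with
  | central => simp [Sat, groupModel2, gwVal, OnZ1Chain]
  | z1 J K => simp [Sat, groupModel2, gwVal, OnZ1Chain]
  | z2 i => exact i.elim0

theorem sat_chiA_chiB (t : ℕ) :
    (∀ v : (groupModel2 n 0 α).World, Sat _ v (chiA t) ↔ OnZ1Chain (ReachesEnd 0 t) v.1) ∧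
    (∀ v : (groupModel2 n 0 α).World, Sat _ v (chiB t) ↔ OnZ1Chain (ReachesEnd 1 t) v.1) := by
  induction t with
  | zero =>
    have hbase (ag : Fin 2) (v : (groupModel2 n 0 α).World) :
        Sat _ v (.atom 0) ↔ OnZ1Chain (ReachesEnd ag 0) v.1 :=
      (sat_z0_iff v).trans
        (onZ1Chain_congr (fun _ _ _ hK => (reachesEnd_zero_iff hK).symm) _)
    exact ⟨hbase 0, hbase 1⟩
  | succ t ih =>
    refine ⟨fun v => (sat_khat_step_iff ih.2 v).trans ?_,
      fun v => (sat_khat_step_iff ih.1 v).trans ?_⟩ <;>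
    exact onZ1Chain_congr (fun _ _ hL hK => (reachesEnd_succ_iff (by decide) hL hK).symm) _

theorem sat_chiX_iff (j : ℕ) (v : (groupModel2 n 0 α).World) :
    Sat _ v (chiX j) ↔ ∃ J : Fin n, v.1 = .z1 J 0 ∧ J.1 + 1 = j := by
  change gwVal v.1 1 ∧ ¬ gwVal v.1 2 ∧ Sat _ v (chiB j) ∧ ¬ Sat _ v (chiB (j - 1)) ↔ _
  rw [(sat_chiA_chiB j).2, (sat_chiA_chiB (j - 1)).2]
  obtain ⟨v, -⟩ := v
  cases v with
  | central => exact ⟨fun ⟨_, _, h, _⟩ => False.elim h, fun ⟨_, h, _⟩ => nomatch h⟩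
  | z1 J K =>
    constructor
    · rintro ⟨hK, -, hj, hj'⟩
      simp only [gwVal, OnZ1Chain, ReachesEnd] at hK hj hj'
      have hJ : J.1 + 1 = j := by omega
      obtain rfl : K = 0 := Fin.ext (by simpa using hK)
      exact ⟨J, rfl, hJ⟩
    · rintro ⟨J', h, rfl⟩
      cases h
      simp [gwVal, OnZ1Chain, ReachesEnd]
  | z2 i => exact i.elim0

end GroupOfWorlds

/-- Let `G` be the group of worlds representing a truth assignment `α`
to `x_1, …, x_n` (in the two-agent three-variable encoding). Then for every `1 ≤ j ≤ n`
and every world `v` of `G`, the formula `χ_j = z_1 ∧ ¬z_2 ∧ χ^b_j ∧ ¬χ^b_{j-1}` is true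
at `v` if and only if `v` is the first world of a z1-chain of length exactly `j` in `G`;
consequently, the central world of `G` satisfies `K̂_a χ_j` if and only if `α x_j = 1`. -/
theorem statement13 (n : ℕ) (α : ℕ → Bool) (j : ℕ) (h1 : 1 ≤ j) (h2 : j ≤ n) :
    (∀ v : (groupModel2 n 0 α).World,
      Sat (groupModel2 n 0 α) v (chiX j) ↔
        ∃ jj : Fin n, v.1 = GWBase.z1 jj 0 ∧ jj.1 + 1 = j) ∧
    (Sat (groupModel2 n 0 α) (central2 n 0 α) (khat 0 (chiX j)) ↔ α j = true) := by
  refine ⟨sat_chiX_iff j, ?_⟩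
  rw [sat_khat]
  constructor
  · rintro ⟨u, -, hu⟩
    obtain ⟨J, hJ, rfl⟩ := (sat_chiX_iff j u).1 hu
    exact u.2 J 0 hJ
  · intro hα
    obtain ⟨J, rfl⟩ : ∃ J : Fin n, J.1 + 1 = j := ⟨⟨j - 1, by omega⟩, Nat.sub_add_cancel h1⟩
    exact ⟨z1World J 0 hα, Or.inr (Or.inl ⟨rfl, trivial, rfl⟩), (sat_chiX_iff _ _).2 ⟨J, rfl, rfl⟩⟩

end DELMC
end
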